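/- arXiv:2403.15056 — 7 statements merged into one kernel-verified Lean document; each statement's English description precedes it below -/
import Mathlib

section
/- For every α > 0 and all bounds β_B, β_C, β_KB, β_KC ≥ 0 there exists a constant c ≥ 0, depending only on α, β_B, β_C, β_KB, β_KC (in particular independent of the Hilbert spaces involved and of the operator A), with the following property. Let V, U, Y be real Hilbert spaces, let A : V → V*, B : U → V*, C : V → Y, K_B : V → U, K_C : Y → V* be bounded linear operators with ‖B‖ ≤ β_B, ‖C‖ ≤ β_C, ‖K_B‖ ≤ β_KB, ‖K_C‖ ≤ β_KC, let B* : V → U be a bounded linear operator satisfying ⟨Bu, v⟩ = ⟪B*v, u⟫_U for all u ∈ U, v ∈ V, and assume the stabilizability and detectability conditions: ⟨Aw, w⟩ + ⟨B(K_B w), w⟩ ≥ α‖w‖²_V and ⟨Aw, w⟩ + ⟨K_C(Cw), w⟩ ≥ α‖w‖²_V for all w ∈ V. If y, p ∈ V, u ∈ U, ε₁, ε₃ ∈ V* and ε₂ ∈ U satisfy the optimality system: (a) ⟪Cy, Cv⟫_Y + ⟨Av, p⟩ = ⟨ε₁, v⟩ for all v ∈ V; (b) u + B*p = ε₂ in U;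 (c) ⟨Ay, v⟩ + ⟨Bu, v⟩ = ⟨ε₃, v⟩ for all v ∈ V; then ‖y‖²_V + ‖u‖²_U + ‖p‖²_V ≤ c·(‖ε₁‖²_{V*} + ‖ε₂‖²_U + ‖ε₃‖²_{V*}). -/
open RealInnerProductSpace

set_option maxHeartbeats 1000000

lemma val_le_aux {V : Type} [NormedAddCommGroup V] [NormedSpace ℝ V]
    (f : V →L[ℝ] ℝ) (v : V) : f v ≤ ‖f‖ * ‖v‖ :=
  (le_abs_self _).trans ((Real.norm_eq_abs (f v)) ▸ f.le_opNorm v)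

lemma real_key (α M e1 e2 e3 y p u cy : ℝ)
    (hα : 0 < α) (hM : 0 ≤ M)
    (hy : 0 ≤ y) (hp : 0 ≤ p) (hu : 0 ≤ u) (hcy : 0 ≤ cy)
    (he1 : 0 ≤ e1) (he2 : 0 ≤ e2) (he3 : 0 ≤ e3)
    (H1 : cy^2 + u^2 ≤ e1*y + e3*p + e2*u)
    (H2 : α*y ≤ e3 + M*u + M*cy)
    (H3 : α*p ≤ e1 + M*e2 + M*cy + M*u) :
    y^2 + u^2 + p^2 ≤
      (3*(2*α^2 + 2*α^2*(1+M)^2 + α^2*(4*α*(2+M)+(4*M+2*α)^2)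
        + 4*M^2*(4*α*(2+M)+(4*M+2*α)^2))/α^4) * (e1^2+e2^2+e3^2) := by
  set E := e1 + e2 + e3 with hE
  set s := cy + u with hs
  have hEnn : 0 ≤ E := by positivity
  have hsnn : 0 ≤ s := by positivity
  have hs2 : s^2 ≤ 2*E*(y+p+s) := by
    nlinarith [sq_nonneg (cy-u), mul_nonneg (add_nonneg he2 he3) hy,
      mul_nonneg (add_nonneg he1 he2) hp, mul_nonneg (add_nonneg he1 he3) hu,
      mul_nonneg hEnn hcy]
  have hsum : α*(y+p) ≤ (2+M)*E + 2*M*s := by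
    nlinarith [mul_nonneg hM he1, mul_nonneg hM he3]
  have hI4 : α^2*s^2 ≤ (4*α*(2+M)+(4*M+2*α)^2)*E^2 := by
    have A1 := mul_le_mul_of_nonneg_left hs2 (by positivity : (0:ℝ) ≤ 2*α^2)
    have A2 := mul_le_mul_of_nonneg_left hsum (by positivity : (0:ℝ) ≤ 4*α*E)
    nlinarith [A1, A2, sq_nonneg ((4*M+2*α)*E - α*s)]
  have hyl : α*y ≤ E + M*s := by nlinarith
  have hy2 : α^2*y^2 ≤ 2*E^2 + 2*M^2*s^2 := by
    have hR : 0 ≤ E + M*s := by positivity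
    have h2 := mul_le_mul hyl hyl (mul_nonneg hα.le hy) hR
    nlinarith [h2, sq_nonneg (E - M*s)]
  have hpl : α*p ≤ (1+M)*E + M*s := by nlinarith [mul_nonneg hM he1, mul_nonneg hM he3]
  have hp2 : α^2*p^2 ≤ 2*(1+M)^2*E^2 + 2*M^2*s^2 := by
    have hR : 0 ≤ (1+M)*E + M*s := by positivity
    have h2 := mul_le_mul hpl hpl (mul_nonneg hα.le hp) hR
    nlinarith [h2, sq_nonneg ((1+M)*E - M*s)]
  have hu2 : α^2*u^2 ≤ α^2*s^2 := by
    have : u^2 ≤ s^2 := by nlinarith [mul_nonneg hcy hu, sq_nonneg cy]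
    exact mul_le_mul_of_nonneg_left this (sq_nonneg α)
  have hE3 : E^2 ≤ 3*(e1^2+e2^2+e3^2) := by
    nlinarith [sq_nonneg (e1-e2), sq_nonneg (e1-e3), sq_nonneg (e2-e3)]
  set K' := 4*α*(2+M)+(4*M+2*α)^2 with hK'
  have hK'nn : 0 ≤ K' := by positivity
  have hfin : α^4*(y^2+u^2+p^2) ≤ (2*α^2 + 2*α^2*(1+M)^2 + α^2*K' + 4*M^2*K')*E^2 := by
    have t1 := mul_le_mul_of_nonneg_left hy2 (sq_nonneg α)
    have t2 := mul_le_mul_of_nonneg_left hp2 (sq_nonneg α)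
    have t3 : α^2*(α^2*u^2) ≤ α^2*(K'*E^2) :=
      mul_le_mul_of_nonneg_left (hu2.trans hI4) (sq_nonneg α)
    have t4 := mul_le_mul_of_nonneg_left hI4 (by positivity : (0:ℝ) ≤ 4*M^2)
    nlinarith [t1, t2, t3, t4]
  have hNnn : 0 ≤ 2*α^2 + 2*α^2*(1+M)^2 + α^2*K' + 4*M^2*K' := by positivity
  rw [div_mul_eq_mul_div, le_div_iff₀ (by positivity : (0:ℝ) < α^4)]
  have := mul_le_mul_of_nonneg_left hE3 hNnn
  nlinarith [hfin, this]

/-- Theorem 3.2 (elliptic case): uniform bound on the solution operator of the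
first-order optimality system under stabilizability and detectability. -/
theorem stmt_0 (α βB βC βKB βKC : ℝ) (hα : 0 < α) (hβB : 0 ≤ βB) (hβC : 0 ≤ βC)
    (hβKB : 0 ≤ βKB) (hβKC : 0 ≤ βKC) :
    ∃ c : ℝ, 0 ≤ c ∧
      ∀ (V U Y : Type)
        [NormedAddCommGroup V] [InnerProductSpace ℝ V] [CompleteSpace V]
        [NormedAddCommGroup U] [InnerProductSpace ℝ U] [CompleteSpace U]
        [NormedAddCommGroup Y] [InnerProductSpace ℝ Y] [CompleteSpace Y]
        (A : V →L[ℝ] V →L[ℝ] ℝ) (B : U →L[ℝ] V →L[ℝ] ℝ) (C : V →L[ℝ] Y)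
        (KB : V →L[ℝ] U) (KC : Y →L[ℝ] V →L[ℝ] ℝ) (Bstar : V →L[ℝ] U),
        ‖B‖ ≤ βB → ‖C‖ ≤ βC → ‖KB‖ ≤ βKB → ‖KC‖ ≤ βKC →
        (∀ (u : U) (v : V), B u v = ⟪Bstar v, u⟫) →
        (∀ w : V, A w w + B (KB w) w ≥ α * ‖w‖ ^ 2) →
        (∀ w : V, A w w + KC (C w) w ≥ α * ‖w‖ ^ 2) →
        ∀ (y p : V) (u : U) (ε₁ ε₃ : V →L[ℝ] ℝ) (ε₂ : U),
          (∀ v : V, ⟪C y, C v⟫ + A v p = ε₁ v) →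
          u + Bstar p = ε₂ →
          (∀ v : V, A y v + B u v = ε₃ v) →
          ‖y‖ ^ 2 + ‖u‖ ^ 2 + ‖p‖ ^ 2 ≤ c * (‖ε₁‖ ^ 2 + ‖ε₂‖ ^ 2 + ‖ε₃‖ ^ 2) := by
  have hM : 0 ≤ βB + βC + βKB + βKC := by positivity
  refine ⟨3*(2*α^2 + 2*α^2*(1+(βB + βC + βKB + βKC))^2
      + α^2*(4*α*(2+(βB + βC + βKB + βKC))+(4*(βB + βC + βKB + βKC)+2*α)^2)
      + 4*(βB + βC + βKB + βKC)^2*(4*α*(2+(βB + βC + βKB + βKC))+(4*(βB + βC + βKB + βKC)+2*α)^2))/α^4,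
    ?_, ?_⟩
  · have hK' : 0 ≤ 4*α*(2+(βB + βC + βKB + βKC))+(4*(βB + βC + βKB + βKC)+2*α)^2 := by
      nlinarith
    apply div_nonneg _ (by positivity)
    nlinarith [mul_nonneg (sq_nonneg α) hK', mul_nonneg (sq_nonneg (βB + βC + βKB + βKC)) hK',
      sq_nonneg (α*(1+(βB + βC + βKB + βKC))), sq_nonneg α]
  intro V U Y _ _ _ _ _ _ _ _ _ A B C KB KC Bstar hB hC hKB hKC hadj hstab hdet
    y p u ε₁ ε₃ ε₂ ha hb hc
  set M := βB + βC + βKB + βKC with hMdef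
  -- H1
  have e1y := ha y
  have e3p := hc p
  have hBs : Bstar p = ε₂ - u := eq_sub_of_add_eq' hb
  have hBup : B u p = ⟪ε₂, u⟫ - ‖u‖^2 := by
    rw [hadj u p, hBs, inner_sub_left, real_inner_self_eq_norm_sq]
  rw [hBup] at e3p
  have hself : ⟪C y, C y⟫ = ‖C y‖^2 := real_inner_self_eq_norm_sq (C y)
  have key1 : ‖C y‖^2 + ‖u‖^2 = ε₁ y - ε₃ p + ⟪ε₂, u⟫ := by linarith
  have b11 : ε₁ y ≤ ‖ε₁‖*‖y‖ := val_le_aux ε₁ y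
  have b12 : -(ε₃ p) ≤ ‖ε₃‖*‖p‖ := by
    have := val_le_aux ε₃ (-p); rwa [map_neg, norm_neg] at this
  have b13 : ⟪ε₂, u⟫ ≤ ‖ε₂‖*‖u‖ := real_inner_le_norm ε₂ u
  have H1 : ‖C y‖^2 + ‖u‖^2 ≤ ‖ε₁‖*‖y‖ + ‖ε₃‖*‖p‖ + ‖ε₂‖*‖u‖ := by linarith
  -- H2 (detectability on y)
  have hdy := hdet y
  have hcy := hc y
  have hBu : ‖B u‖ ≤ βB*‖u‖ :=
    (B.le_opNorm u).trans (mul_le_mul_of_nonneg_right hB (norm_nonneg u))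
  have b21 : ε₃ y ≤ ‖ε₃‖*‖y‖ := val_le_aux ε₃ y
  have b22 : -(B u y) ≤ βB*‖u‖*‖y‖ := by
    have h1 := val_le_aux (B u) (-y)
    rw [map_neg, norm_neg] at h1
    have h2 := mul_le_mul_of_nonneg_right hBu (norm_nonneg y)
    linarith
  have hKCy : ‖KC (C y)‖ ≤ βKC*‖C y‖ :=
    (KC.le_opNorm (C y)).trans (mul_le_mul_of_nonneg_right hKC (norm_nonneg _))
  have b23 : KC (C y) y ≤ βKC*‖C y‖*‖y‖ := by
    have h1 := val_le_aux (KC (C y)) y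
    have h2 := mul_le_mul_of_nonneg_right hKCy (norm_nonneg y)
    linarith
  have αy2 : α*‖y‖^2 ≤ (‖ε₃‖ + M*‖u‖ + M*‖C y‖)*‖y‖ := by
    rw [hMdef]
    nlinarith [hdy, hcy, b21, b22, b23,
      mul_nonneg (mul_nonneg (by linarith : (0:ℝ) ≤ βC+βKB+βKC) (norm_nonneg u)) (norm_nonneg y),
      mul_nonneg (mul_nonneg (by linarith : (0:ℝ) ≤ βB+βC+βKB) (norm_nonneg (C y))) (norm_nonneg y)]
  have hRnn2 : 0 ≤ ‖ε₃‖ + M*‖u‖ + M*‖C y‖ :=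
    add_nonneg (add_nonneg (norm_nonneg _) (mul_nonneg hM (norm_nonneg _)))
      (mul_nonneg hM (norm_nonneg _))
  have H2 : α*‖y‖ ≤ ‖ε₃‖ + M*‖u‖ + M*‖C y‖ := by
    rcases (norm_nonneg y).eq_or_lt with h0 | hpos
    · calc α*‖y‖ = 0 := by rw [← h0]; ring
        _ ≤ _ := hRnn2
    · refine le_of_mul_le_mul_right ?_ hpos
      calc α*‖y‖*‖y‖ = α*‖y‖^2 := by ring
        _ ≤ _ := αy2
  -- H3 (stabilizability on p)
  have hsp := hstab p
  have hap := ha p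
  have hBKBp : B (KB p) p = ⟪ε₂ - u, KB p⟫ := by rw [hadj (KB p) p, hBs]
  rw [hBKBp] at hsp
  have b31 : ε₁ p ≤ ‖ε₁‖*‖p‖ := val_le_aux ε₁ p
  have b32 : -⟪C y, C p⟫ ≤ βC*‖C y‖*‖p‖ := by
    have h1 : ⟪C y, -(C p)⟫ ≤ ‖C y‖*‖C p‖ := by
      have := real_inner_le_norm (C y) (-(C p)); rwa [norm_neg] at this
    rw [inner_neg_right] at h1
    have h2 : ‖C p‖ ≤ βC*‖p‖ :=
      (C.le_opNorm p).trans (mul_le_mul_of_nonneg_right hC (norm_nonneg p))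
    nlinarith [norm_nonneg (C y)]
  have b33 : ⟪ε₂ - u, KB p⟫ ≤ (‖ε₂‖+‖u‖)*(βKB*‖p‖) := by
    have h1 := real_inner_le_norm (ε₂ - u) (KB p)
    have h2 : ‖KB p‖ ≤ βKB*‖p‖ :=
      (KB.le_opNorm p).trans (mul_le_mul_of_nonneg_right hKB (norm_nonneg p))
    have h3 : ‖ε₂ - u‖ ≤ ‖ε₂‖+‖u‖ := norm_sub_le ε₂ u
    nlinarith [norm_nonneg (ε₂ - u), norm_nonneg (KB p), norm_nonneg ε₂, norm_nonneg u,
      mul_nonneg (norm_nonneg p) hβKB]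
  have αp2 : α*‖p‖^2 ≤ (‖ε₁‖ + M*‖ε₂‖ + M*‖C y‖ + M*‖u‖)*‖p‖ := by
    rw [hMdef]
    nlinarith [hsp, hap, b31, b32, b33,
      mul_nonneg (mul_nonneg (by linarith : (0:ℝ) ≤ βB+βC+βKC) (norm_nonneg ε₂)) (norm_nonneg p),
      mul_nonneg (mul_nonneg (by linarith : (0:ℝ) ≤ βB+βKB+βKC) (norm_nonneg (C y))) (norm_nonneg p),
      mul_nonneg (mul_nonneg (by linarith : (0:ℝ) ≤ βB+βC+βKC) (norm_nonneg u)) (norm_nonneg p)]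
  have hRnn3 : 0 ≤ ‖ε₁‖ + M*‖ε₂‖ + M*‖C y‖ + M*‖u‖ :=
    add_nonneg (add_nonneg (add_nonneg (norm_nonneg _) (mul_nonneg hM (norm_nonneg _)))
      (mul_nonneg hM (norm_nonneg _))) (mul_nonneg hM (norm_nonneg _))
  have H3 : α*‖p‖ ≤ ‖ε₁‖ + M*‖ε₂‖ + M*‖C y‖ + M*‖u‖ := by
    rcases (norm_nonneg p).eq_or_lt with h0 | hpos
    · calc α*‖p‖ = 0 := by rw [← h0]; ring
        _ ≤ _ := hRnn3
    · refine le_of_mul_le_mul_right ?_ hpos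
      calc α*‖p‖*‖p‖ = α*‖p‖^2 := by ring
        _ ≤ _ := αp2
  exact real_key α M ‖ε₁‖ ‖ε₂‖ ‖ε₃‖ ‖y‖ ‖p‖ ‖u‖ ‖C y‖ hα hM (norm_nonneg _)
    (norm_nonneg _) (norm_nonneg _) (norm_nonneg _) (norm_nonneg _) (norm_nonneg _)
    (norm_nonneg _) H1 H2 H3
end

section
/- Let V, U, Y be real Hilbert spaces, let A : V → V*, B : U → V*, C : V → Y, K_C : Y → V* be bounded linear operators, and let B* : V → U be a bounded linear operator satisfying ⟨Bu, v⟩ = ⟪B*v, u⟫_U for all u ∈ U, v ∈ V. Assume the detectability condition: there is α > 0 with ⟨Aw, w⟩ + ⟨K_C(Cw), w⟩ ≥ α‖w‖²_V for all w ∈ V. Suppose y, p ∈ V, u ∈ U, ε₂ ∈ U, ε₃ ∈ V* satisfy u = −B*p + ε₂ and the state equation ⟨Ay, v⟩ + ⟨Bu, v⟩ = ⟨ε₃, v⟩ for all v ∈ V. Then, with m := max{‖B‖, ‖K_C‖}, one has ‖y‖²_V ≤ (4/α²)·(‖ε₃‖²_{V*} + ‖B‖²‖ε₂‖²_U + m²·(‖B*p‖²_U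 + ‖Cy‖²_Y)). -/
open RealInnerProductSpace

/-- The state-variable bound (3.4) from the proof of Theorem 3.2. -/
theorem stmt_1 {V U Y : Type*}
    [NormedAddCommGroup V] [InnerProductSpace ℝ V] [CompleteSpace V]
    [NormedAddCommGroup U] [InnerProductSpace ℝ U] [CompleteSpace U]
    [NormedAddCommGroup Y] [InnerProductSpace ℝ Y] [CompleteSpace Y]
    (A : V →L[ℝ] V →L[ℝ] ℝ) (B : U →L[ℝ] V →L[ℝ] ℝ) (C : V →L[ℝ] Y)
    (KC : Y →L[ℝ] V →L[ℝ] ℝ) (Bstar : V →L[ℝ] U)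
    (hBstar : ∀ (u : U) (v : V), B u v = ⟪Bstar v, u⟫)
    (α : ℝ) (hα : 0 < α)
    (hdet : ∀ w : V, A w w + KC (C w) w ≥ α * ‖w‖ ^ 2)
    (y p : V) (u ε₂ : U) (ε₃ : V →L[ℝ] ℝ)
    (hu : u = -Bstar p + ε₂)
    (hstate : ∀ v : V, A y v + B u v = ε₃ v) :
    ‖y‖ ^ 2 ≤ 4 / α ^ 2 *
      (‖ε₃‖ ^ 2 + ‖B‖ ^ 2 * ‖ε₂‖ ^ 2 +
        (max ‖B‖ ‖KC‖) ^ 2 * (‖Bstar p‖ ^ 2 + ‖C y‖ ^ 2)) := by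
  set m : ℝ := max ‖B‖ ‖KC‖ with hm
  have hBm : ‖B‖ ≤ m := le_max_left _ _
  have hKm : ‖KC‖ ≤ m := le_max_right _ _
  have hm0 : 0 ≤ m := le_trans (norm_nonneg B) hBm
  have hA : A y y = ε₃ y + B (Bstar p) y - B ε₂ y := by
    have h := hstate y
    rw [hu] at h
    simp only [map_add, map_neg, ContinuousLinearMap.add_apply,
      ContinuousLinearMap.neg_apply] at h
    linarith
  have h1 : α * ‖y‖ ^ 2 ≤ ε₃ y + B (Bstar p) y - B ε₂ y + KC (C y) y := by
    have h := hdet y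
    rw [hA] at h
    linarith
  have b1 : ε₃ y ≤ ‖ε₃‖ * ‖y‖ := le_trans (le_abs_self _) (ε₃.le_opNorm y)
  have b2 : B (Bstar p) y ≤ ‖B‖ * ‖Bstar p‖ * ‖y‖ := by
    calc B (Bstar p) y ≤ ‖B (Bstar p)‖ * ‖y‖ :=
          le_trans (le_abs_self _) ((B (Bstar p)).le_opNorm y)
      _ ≤ ‖B‖ * ‖Bstar p‖ * ‖y‖ := by
          gcongr; exact B.le_opNorm _
  have b3 : -B ε₂ y ≤ ‖B‖ * ‖ε₂‖ * ‖y‖ := by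
    calc -B ε₂ y ≤ ‖B ε₂‖ * ‖y‖ :=
          le_trans (neg_le_abs _) ((B ε₂).le_opNorm y)
      _ ≤ ‖B‖ * ‖ε₂‖ * ‖y‖ := by gcongr; exact B.le_opNorm _
  have b4 : KC (C y) y ≤ ‖KC‖ * ‖C y‖ * ‖y‖ := by
    calc KC (C y) y ≤ ‖KC (C y)‖ * ‖y‖ :=
          le_trans (le_abs_self _) ((KC (C y)).le_opNorm y)
      _ ≤ ‖KC‖ * ‖C y‖ * ‖y‖ := by gcongr; exact KC.le_opNorm _
  have hyn : (0:ℝ) ≤ ‖y‖ := norm_nonneg _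
  have key : α * ‖y‖ ^ 2 ≤
      (‖ε₃‖ + ‖B‖ * ‖ε₂‖ + m * ‖Bstar p‖ + m * ‖C y‖) * ‖y‖ := by
    have h5 : ‖B‖ * ‖Bstar p‖ * ‖y‖ ≤ m * ‖Bstar p‖ * ‖y‖ := by gcongr
    have h6 : ‖KC‖ * ‖C y‖ * ‖y‖ ≤ m * ‖C y‖ * ‖y‖ := by gcongr
    have hexp : (‖ε₃‖ + ‖B‖ * ‖ε₂‖ + m * ‖Bstar p‖ + m * ‖C y‖) * ‖y‖
        = ‖ε₃‖ * ‖y‖ + ‖B‖ * ‖ε₂‖ * ‖y‖ + m * ‖Bstar p‖ * ‖y‖ + m * ‖C y‖ * ‖y‖ := by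
      ring
    rw [hexp]
    linarith [h1, b1, b2, b3, b4, h5, h6]
  set T : ℝ := ‖ε₃‖ ^ 2 + ‖B‖ ^ 2 * ‖ε₂‖ ^ 2 + m ^ 2 * (‖Bstar p‖ ^ 2 + ‖C y‖ ^ 2)
    with hT
  have hT0 : 0 ≤ T := by positivity
  have hS2 : (‖ε₃‖ + ‖B‖ * ‖ε₂‖ + m * ‖Bstar p‖ + m * ‖C y‖) ^ 2 ≤ 4 * T := by
    rw [hT]
    nlinarith [sq_nonneg (‖ε₃‖ - ‖B‖ * ‖ε₂‖), sq_nonneg (‖ε₃‖ - m * ‖Bstar p‖),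
      sq_nonneg (‖ε₃‖ - m * ‖C y‖), sq_nonneg (‖B‖ * ‖ε₂‖ - m * ‖Bstar p‖),
      sq_nonneg (‖B‖ * ‖ε₂‖ - m * ‖C y‖), sq_nonneg (m * ‖Bstar p‖ - m * ‖C y‖)]
  rcases eq_or_lt_of_le hyn with h0 | h0
  · have hz : ‖y‖ ^ 2 = 0 := by rw [← h0]; ring
    rw [hz]
    positivity
  · have hy1 : α * ‖y‖ ≤ ‖ε₃‖ + ‖B‖ * ‖ε₂‖ + m * ‖Bstar p‖ + m * ‖C y‖ := by
      have h' : α * ‖y‖ * ‖y‖ ≤ (‖ε₃‖ + ‖B‖ * ‖ε₂‖ + m * ‖Bstar p‖ + m * ‖C y‖) * ‖y‖ := by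
        calc α * ‖y‖ * ‖y‖ = α * ‖y‖ ^ 2 := by ring
          _ ≤ _ := key
      exact le_of_mul_le_mul_right h' h0
    have h2 : α ^ 2 * ‖y‖ ^ 2 ≤ 4 * T := by
      calc α ^ 2 * ‖y‖ ^ 2 = (α * ‖y‖) ^ 2 := by ring
        _ ≤ (‖ε₃‖ + ‖B‖ * ‖ε₂‖ + m * ‖Bstar p‖ + m * ‖C y‖) ^ 2 := by
            apply pow_le_pow_left₀ (by positivity) hy1
        _ ≤ 4 * T := hS2
    rw [div_mul_eq_mul_div, le_div_iff₀ (by positivity)]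
    calc ‖y‖ ^ 2 * α ^ 2 = α ^ 2 * ‖y‖ ^ 2 := by ring
      _ ≤ 4 * T := h2
end

section
/- Let V, U, Y be real Hilbert spaces, let A : V → V*, B : U → V*, C : V → Y, K_B : V → U be bounded linear operators, and let B* : V → U be a bounded linear operator satisfying ⟨Bu, v⟩ = ⟪B*v, u⟫_U for all u ∈ U, v ∈ V. Assume the stabilizability condition: there is α > 0 with ⟨Aw, w⟩ + ⟨B(K_B w), w⟩ ≥ α‖w‖²_V for all w ∈ V. Suppose y, p ∈ V and ε₁ ∈ V* satisfy the adjoint equation ⟪Cy, Cv⟫_Y + ⟨Av, p⟩ = ⟨ε₁, v⟩ for all v ∈ V. Then, with m' := max{‖C‖, ‖K_B‖}, one has ‖p‖²_V ≤ (2/α²)·(‖ε₁‖²_{V*} + 2·m'²·(‖Cy‖²_Y + ‖B*p‖²_U)). -/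
/-!
Testing the adjoint equation with `v = p` and using the stabilizability condition at `w = p`
gives the energy estimate `α ‖p‖² ≤ (‖ε₁‖ + m' ‖C y‖ + m' ‖B* p‖) ‖p‖`, in which the
feedback term `⟨B (K_B p), p⟩ = ⟪B* p, K_B p⟫` is controlled through the adjoint.
Dividing by `‖p‖` and applying `(a + b)² ≤ 2 (a² + b²)` twice gives the bound.
-/

open RealInnerProductSpace

lemma real_inner_map_le {E F : Type*} [SeminormedAddCommGroup E] [NormedSpace ℝ E]
    [NormedAddCommGroup F] [InnerProductSpace ℝ F] {m : ℝ} (L : E →L[ℝ] F) (hL : ‖L‖ ≤ m)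
    (u : F) (x : E) : ⟪u, L x⟫ ≤ m * ‖u‖ * ‖x‖ :=
  calc ⟪u, L x⟫ ≤ ‖u‖ * ‖L x‖ := real_inner_le_norm u (L x)
    _ ≤ ‖u‖ * (m * ‖x‖) := mul_le_mul_of_nonneg_left (L.le_of_opNorm_le hL x) (norm_nonneg u)
    _ = m * ‖u‖ * ‖x‖ := by ring

lemma sq_le_div_sq_of_mul_sq_le_mul {α t M : ℝ} (hα : 0 < α) (ht : 0 ≤ t)
    (h : α * t ^ 2 ≤ M * t) : t ^ 2 ≤ M ^ 2 / α ^ 2 := by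
  rw [le_div_iff₀ (by positivity)]
  rcases ht.eq_or_lt with rfl | ht
  · simpa using sq_nonneg M
  · have hαt : α * t ≤ M := le_of_mul_le_mul_right (by nlinarith) ht
    nlinarith [mul_pos hα ht]

lemma add_mul_add_sq_le (a b c m : ℝ) :
    (a + m * b + m * c) ^ 2 ≤ 2 * (a ^ 2 + 2 * m ^ 2 * (b ^ 2 + c ^ 2)) :=
  calc (a + m * b + m * c) ^ 2 = (a + m * (b + c)) ^ 2 := by ring
    _ ≤ 2 * (a ^ 2 + m ^ 2 * (b + c) ^ 2) := by rw [← mul_pow]; exact add_sq_le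
    _ ≤ 2 * (a ^ 2 + 2 * m ^ 2 * (b ^ 2 + c ^ 2)) := by nlinarith [add_sq_le (a := b) (b := c)]

section AdjointEquation

variable {V U Y : Type*}
    [NormedAddCommGroup V] [InnerProductSpace ℝ V]
    [NormedAddCommGroup U] [InnerProductSpace ℝ U]
    [NormedAddCommGroup Y] [InnerProductSpace ℝ Y]
    (A : V →L[ℝ] V →L[ℝ] ℝ) (B : U →L[ℝ] V →L[ℝ] ℝ) (C : V →L[ℝ] Y)
    (KB : V →L[ℝ] U) (Bstar : V →L[ℝ] U) (y p : V) (ε₁ : V →L[ℝ] ℝ)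

lemma closedLoop_form_eq_of_adjoint
    (hBstar : ∀ (u : U) (v : V), B u v = ⟪Bstar v, u⟫)
    (hadj : ∀ v : V, ⟪C y, C v⟫ + A v p = ε₁ v) :
    A p p + B (KB p) p = ε₁ p + ⟪-C y, C p⟫ + ⟪Bstar p, KB p⟫ := by
  rw [hBstar, inner_neg_left, ← hadj p]
  ring

lemma closedLoop_form_le_of_adjoint {m : ℝ} (hC : ‖C‖ ≤ m) (hKB : ‖KB‖ ≤ m)
    (hBstar : ∀ (u : U) (v : V), B u v = ⟪Bstar v, u⟫)
    (hadj : ∀ v : V, ⟪C y, C v⟫ + A v p = ε₁ v) :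
    A p p + B (KB p) p ≤ (‖ε₁‖ + m * ‖C y‖ + m * ‖Bstar p‖) * ‖p‖ := by
  rw [closedLoop_form_eq_of_adjoint A B C KB Bstar y p ε₁ hBstar hadj]
  have hε₁ : ε₁ p ≤ ‖ε₁‖ * ‖p‖ := (Real.le_norm_self _).trans (ε₁.le_opNorm p)
  have hCy := real_inner_map_le C hC (-C y) p
  have hBp := real_inner_map_le KB hKB (Bstar p) p
  rw [norm_neg] at hCy
  linarith

end AdjointEquation

theorem stmt_2_general {V U Y : Type*}
    [NormedAddCommGroup V] [InnerProductSpace ℝ V]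
    [NormedAddCommGroup U] [InnerProductSpace ℝ U]
    [NormedAddCommGroup Y] [InnerProductSpace ℝ Y]
    (A : V →L[ℝ] V →L[ℝ] ℝ) (B : U →L[ℝ] V →L[ℝ] ℝ) (C : V →L[ℝ] Y)
    (KB : V →L[ℝ] U) (Bstar : V →L[ℝ] U)
    (hBstar : ∀ (u : U) (v : V), B u v = ⟪Bstar v, u⟫)
    (α : ℝ) (hα : 0 < α)
    (hstab : ∀ w : V, A w w + B (KB w) w ≥ α * ‖w‖ ^ 2)
    (y p : V) (ε₁ : V →L[ℝ] ℝ)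
    (hadj : ∀ v : V, ⟪C y, C v⟫ + A v p = ε₁ v) :
    ‖p‖ ^ 2 ≤ 2 / α ^ 2 *
      (‖ε₁‖ ^ 2 + 2 * (max ‖C‖ ‖KB‖) ^ 2 * (‖C y‖ ^ 2 + ‖Bstar p‖ ^ 2)) := by
  set m := max ‖C‖ ‖KB‖
  have henergy : α * ‖p‖ ^ 2 ≤ (‖ε₁‖ + m * ‖C y‖ + m * ‖Bstar p‖) * ‖p‖ :=
    (hstab p).trans <| closedLoop_form_le_of_adjoint A B C KB Bstar y p ε₁
      (le_max_left _ _) (le_max_right _ _) hBstar hadj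
  calc ‖p‖ ^ 2 ≤ (‖ε₁‖ + m * ‖C y‖ + m * ‖Bstar p‖) ^ 2 / α ^ 2 :=
        sq_le_div_sq_of_mul_sq_le_mul hα (norm_nonneg p) henergy
    _ ≤ 2 * (‖ε₁‖ ^ 2 + 2 * m ^ 2 * (‖C y‖ ^ 2 + ‖Bstar p‖ ^ 2)) / α ^ 2 := by
        gcongr
        exact add_mul_add_sq_le _ _ _ _
    _ = _ := by ring

/-- The adjoint-variable bound (3.5) from the proof of Theorem 3.2. -/
theorem stmt_2 {V U Y : Type*}
    [NormedAddCommGroup V] [InnerProductSpace ℝ V] [CompleteSpace V]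
    [NormedAddCommGroup U] [InnerProductSpace ℝ U] [CompleteSpace U]
    [NormedAddCommGroup Y] [InnerProductSpace ℝ Y] [CompleteSpace Y]
    (A : V →L[ℝ] V →L[ℝ] ℝ) (B : U →L[ℝ] V →L[ℝ] ℝ) (C : V →L[ℝ] Y)
    (KB : V →L[ℝ] U) (Bstar : V →L[ℝ] U)
    (hBstar : ∀ (u : U) (v : V), B u v = ⟪Bstar v, u⟫)
    (α : ℝ) (hα : 0 < α)
    (hstab : ∀ w : V, A w w + B (KB w) w ≥ α * ‖w‖ ^ 2)
    (y p : V) (ε₁ : V →L[ℝ] ℝ)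
    (hadj : ∀ v : V, ⟪C y, C v⟫ + A v p = ε₁ v) :
    ‖p‖ ^ 2 ≤ 2 / α ^ 2 *
      (‖ε₁‖ ^ 2 + 2 * (max ‖C‖ ‖KB‖) ^ 2 * (‖C y‖ ^ 2 + ‖Bstar p‖ ^ 2)) :=
  stmt_2_general A B C KB Bstar hBstar α hα hstab y p ε₁ hadj
end

section
/- Let V, U, Y be real Hilbert spaces, let A : V → V*, B : U → V*, C : V → Y be bounded linear operators, and let B* : V → U be a bounded linear operator satisfying ⟨Bu, v⟩ = ⟪B*v, u⟫_U for all u ∈ U, v ∈ V. Suppose y, p ∈ V, u ∈ U, ε₁, ε₃ ∈ V*, ε₂ ∈ U satisfy: (a) the adjoint equation ⟪Cy, Cv⟫_Y + ⟨Av, p⟩ = ⟨ε₁, v⟩ for all v ∈ V; (b) u = −B*p + ε₂; (c) the state equation ⟨Ay, v⟩ + ⟨Bu, v⟩ = ⟨ε₃, v⟩ for all v ∈ V. Then ‖Cy‖²_Y + ‖B*p‖²_U ≤ ‖ε₁‖_{V*}·‖y‖_V + (‖ε₃‖_{V*} + ‖B‖·‖ε₂‖_U)·‖p‖_V. -/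
open RealInnerProductSpace

/-- The cross-testing bound (3.6) from the proof of Theorem 3.2. -/
theorem stmt_3 {V U Y : Type*}
    [NormedAddCommGroup V] [InnerProductSpace ℝ V] [CompleteSpace V]
    [NormedAddCommGroup U] [InnerProductSpace ℝ U] [CompleteSpace U]
    [NormedAddCommGroup Y] [InnerProductSpace ℝ Y] [CompleteSpace Y]
    (A : V →L[ℝ] V →L[ℝ] ℝ) (B : U →L[ℝ] V →L[ℝ] ℝ) (C : V →L[ℝ] Y)
    (Bstar : V →L[ℝ] U)
    (hBstar : ∀ (u : U) (v : V), B u v = ⟪Bstar v, u⟫)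
    (y p : V) (u ε₂ : U) (ε₁ ε₃ : V →L[ℝ] ℝ)
    (hadj : ∀ v : V, ⟪C y, C v⟫ + A v p = ε₁ v)
    (hu : u = -Bstar p + ε₂)
    (hstate : ∀ v : V, A y v + B u v = ε₃ v) :
    ‖C y‖ ^ 2 + ‖Bstar p‖ ^ 2 ≤
      ‖ε₁‖ * ‖y‖ + (‖ε₃‖ + ‖B‖ * ‖ε₂‖) * ‖p‖ := by
  have h1 : ‖C y‖ ^ 2 + A y p = ε₁ y := by
    simpa [real_inner_self_eq_norm_sq] using hadj y
  have h2 : A y p + B u p = ε₃ p := hstate p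
  have h3 : B u p = -‖Bstar p‖ ^ 2 + B ε₂ p := by
    rw [hu]
    have := hBstar (-Bstar p + ε₂) p
    rw [this, inner_add_right, inner_neg_right, real_inner_self_eq_norm_sq,
      ← hBstar ε₂ p]
  have key : ‖C y‖ ^ 2 + ‖Bstar p‖ ^ 2 = ε₁ y - ε₃ p + B ε₂ p := by
    rw [h3] at h2; linarith
  have b1 : ε₁ y ≤ ‖ε₁‖ * ‖y‖ := le_trans (le_abs_self _)
    (by simpa using ε₁.le_opNorm y)
  have b2 : -ε₃ p ≤ ‖ε₃‖ * ‖p‖ := le_trans (neg_le_abs _)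
    (by simpa using ε₃.le_opNorm p)
  have b3 : B ε₂ p ≤ ‖B‖ * ‖ε₂‖ * ‖p‖ := le_trans (le_abs_self _)
    (by simpa using (B ε₂).le_of_opNorm_le (B.le_opNorm ε₂) p)
  linarith
end

section
/- Let α > 0 and β, m, m' ≥ 0 be real numbers, and set d := 2(m² + m'²). Suppose nonnegative real numbers Y, P, CY, BP, E₁, E₂, E₃ satisfy the three inequalities: (i) Y² ≤ (4/α²)·(E₃² + β²E₂² + m²·(BP² + CY²)); (ii) P² ≤ (2/α²)·(E₁² + 2m'²·(CY² + BP²)); (iii) CY² + BP² ≤ E₁·Y + (E₃ + β·E₂)·P. Then Y² + P² ≤ 8·(1/α² + d²/α⁴)·max{1, β²}·(E₁² + E₂² + E₃²). -/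
lemma young_aux (x a b : ℝ) : (2 * x) * (a * b) ≤ b ^ 2 / 2 + 2 * x ^ 2 * a ^ 2 := by
  nlinarith [sq_nonneg (b - 2 * x * a)]

set_option maxHeartbeats 1600000 in
/-- The real-number combination step in the proof of Theorem 3.2. -/
theorem stmt_4 (α β m m' : ℝ) (hα : 0 < α) (hβ : 0 ≤ β) (hm : 0 ≤ m) (hm' : 0 ≤ m')
    (d : ℝ) (hd : d = 2 * (m ^ 2 + m' ^ 2))
    (Y P CY BP E₁ E₂ E₃ : ℝ)
    (hY : 0 ≤ Y) (hP : 0 ≤ P) (hCY : 0 ≤ CY) (hBP : 0 ≤ BP)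
    (hE₁ : 0 ≤ E₁) (hE₂ : 0 ≤ E₂) (hE₃ : 0 ≤ E₃)
    (h1 : Y ^ 2 ≤ 4 / α ^ 2 * (E₃ ^ 2 + β ^ 2 * E₂ ^ 2 + m ^ 2 * (BP ^ 2 + CY ^ 2)))
    (h2 : P ^ 2 ≤ 2 / α ^ 2 * (E₁ ^ 2 + 2 * m' ^ 2 * (CY ^ 2 + BP ^ 2)))
    (h3 : CY ^ 2 + BP ^ 2 ≤ E₁ * Y + (E₃ + β * E₂) * P) :
    Y ^ 2 + P ^ 2 ≤
      8 * (1 / α ^ 2 + d ^ 2 / α ^ 4) * max 1 (β ^ 2) * (E₁ ^ 2 + E₂ ^ 2 + E₃ ^ 2) := by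
  have hα2 : (0:ℝ) < α ^ 2 := by positivity
  obtain ⟨u, hu_def⟩ : ∃ u : ℝ, u = 1 / α ^ 2 := ⟨_, rfl⟩
  have hu : 0 < u := by rw [hu_def]; positivity
  have h4 : (4:ℝ) / α ^ 2 = 4 * u := by rw [hu_def]; ring
  have h2'' : (2:ℝ) / α ^ 2 = 2 * u := by rw [hu_def]; ring
  rw [h4] at h1
  rw [h2''] at h2
  have hd0 : 0 ≤ d := by nlinarith [sq_nonneg m, sq_nonneg m']
  have hM1 : (1:ℝ) ≤ max 1 (β ^ 2) := le_max_left _ _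
  have hMβ : β ^ 2 ≤ max 1 (β ^ 2) := le_max_right _ _
  have hM0 : (0:ℝ) ≤ max 1 (β ^ 2) := le_trans zero_le_one hM1
  have hS : 4 * u * (m ^ 2 * (BP ^ 2 + CY ^ 2)) + 2 * u * (2 * m' ^ 2 * (CY ^ 2 + BP ^ 2))
      = (2 * (d * u)) * (CY ^ 2 + BP ^ 2) := by rw [hd]; ring
  have h3' : (2 * (d * u)) * (CY ^ 2 + BP ^ 2)
      ≤ (2 * (d * u)) * (E₁ * Y + (E₃ + β * E₂) * P) :=
    mul_le_mul_of_nonneg_left h3 (by positivity)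
  have y1 := young_aux (d * u) E₁ Y
  have y2 := young_aux (d * u) (E₃ + β * E₂) P
  have hsq : (E₃ + β * E₂) ^ 2 ≤ 2 * E₃ ^ 2 + 2 * β ^ 2 * E₂ ^ 2 := by
    nlinarith [sq_nonneg (E₃ - β * E₂)]
  have hsq' : 2 * (d * u) ^ 2 * (E₃ + β * E₂) ^ 2
      ≤ 2 * (d * u) ^ 2 * (2 * E₃ ^ 2 + 2 * β ^ 2 * E₂ ^ 2) :=
    mul_le_mul_of_nonneg_left hsq (by positivity)
  have key : Y ^ 2 + P ^ 2 ≤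
      4 * u * E₁ ^ 2 + 8 * u * E₃ ^ 2 + 8 * u * β ^ 2 * E₂ ^ 2 +
      4 * d ^ 2 * u ^ 2 * (E₁ ^ 2 + 2 * E₃ ^ 2 + 2 * β ^ 2 * E₂ ^ 2) := by
    have hY2 : (2 * (d * u)) * (E₁ * Y) = (2 * (d * u)) * (E₁ * Y) := rfl
    linarith [h1, h2, hS, h3', y1, y2, hsq']
  have hrhs : 8 * (1 / α ^ 2 + d ^ 2 / α ^ 4) * max 1 (β ^ 2) * (E₁ ^ 2 + E₂ ^ 2 + E₃ ^ 2)
      = 8 * (u + d ^ 2 * u ^ 2) * max 1 (β ^ 2) * (E₁ ^ 2 + E₂ ^ 2 + E₃ ^ 2) := by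
    rw [hu_def]; ring
  rw [hrhs]
  have t1 : 4 * u * E₁ ^ 2 * 1 ≤ 4 * u * E₁ ^ 2 * max 1 (β ^ 2) :=
    mul_le_mul_of_nonneg_left hM1 (by positivity)
  have t2 : 8 * u * E₃ ^ 2 * 1 ≤ 8 * u * E₃ ^ 2 * max 1 (β ^ 2) :=
    mul_le_mul_of_nonneg_left hM1 (by positivity)
  have t3 : 8 * u * E₂ ^ 2 * β ^ 2 ≤ 8 * u * E₂ ^ 2 * max 1 (β ^ 2) :=
    mul_le_mul_of_nonneg_left hMβ (by positivity)
  have t4 : 4 * d ^ 2 * u ^ 2 * E₁ ^ 2 * 1 ≤ 4 * d ^ 2 * u ^ 2 * E₁ ^ 2 * max 1 (β ^ 2) :=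
    mul_le_mul_of_nonneg_left hM1 (by positivity)
  have t5 : 8 * d ^ 2 * u ^ 2 * E₃ ^ 2 * 1 ≤ 8 * d ^ 2 * u ^ 2 * E₃ ^ 2 * max 1 (β ^ 2) :=
    mul_le_mul_of_nonneg_left hM1 (by positivity)
  have t6 : 8 * d ^ 2 * u ^ 2 * E₂ ^ 2 * β ^ 2 ≤ 8 * d ^ 2 * u ^ 2 * E₂ ^ 2 * max 1 (β ^ 2) :=
    mul_le_mul_of_nonneg_left hMβ (by positivity)
  have s1 : (0:ℝ) ≤ 4 * u * E₁ ^ 2 * max 1 (β ^ 2) := by positivity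
  have s2 : (0:ℝ) ≤ 8 * u * E₂ ^ 2 * max 1 (β ^ 2) := by positivity
  have s3 : (0:ℝ) ≤ 4 * d ^ 2 * u ^ 2 * E₁ ^ 2 * max 1 (β ^ 2) := by positivity
  linarith [key, t1, t2, t3, t4, t5, t6, s1, s2, s3]
end

section
/- Let V, U, Y be real Hilbert spaces, let A : V → V*, B : U → V*, C : V → Y, K_B : V → U, K_C : Y → V* be bounded linear operators, and let B* : V → U be a bounded linear operator satisfying ⟨Bu, v⟩ = ⟪B*v, u⟫_U for all u ∈ U, v ∈ V. Assume there is α > 0 such that ⟨Aw, w⟩ + ⟨B(K_B w), w⟩ ≥ α‖w‖²_V and ⟨Aw, w⟩ + ⟨K_C(Cw), w⟩ ≥ α‖w‖²_V for all w ∈ V. If y, p ∈ V and u ∈ U satisfy the homogeneous optimality system: ⟪Cy, Cv⟫_Y + ⟨Av, p⟩ = 0 for all v ∈ V; u + B*p = 0; and ⟨Ay, v⟩ + ⟨Bu, v⟩ = 0 for all v ∈ V; then y = 0, u = 0 and p = 0. -/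
open RealInnerProductSpace

/-- Injectivity of the optimality-system operator under stabilizability and
detectability (remark after Theorem 3.2). -/
theorem stmt_5 {V U Y : Type*}
    [NormedAddCommGroup V] [InnerProductSpace ℝ V] [CompleteSpace V]
    [NormedAddCommGroup U] [InnerProductSpace ℝ U] [CompleteSpace U]
    [NormedAddCommGroup Y] [InnerProductSpace ℝ Y] [CompleteSpace Y]
    (A : V →L[ℝ] V →L[ℝ] ℝ) (B : U →L[ℝ] V →L[ℝ] ℝ) (C : V →L[ℝ] Y)
    (KB : V →L[ℝ] U) (KC : Y →L[ℝ] V →L[ℝ] ℝ) (Bstar : V →L[ℝ] U)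
    (hBstar : ∀ (u : U) (v : V), B u v = ⟪Bstar v, u⟫)
    (α : ℝ) (hα : 0 < α)
    (hstab : ∀ w : V, A w w + B (KB w) w ≥ α * ‖w‖ ^ 2)
    (hdet : ∀ w : V, A w w + KC (C w) w ≥ α * ‖w‖ ^ 2)
    (y p : V) (u : U)
    (hadj : ∀ v : V, ⟪C y, C v⟫ + A v p = 0)
    (hu : u + Bstar p = 0)
    (hstate : ∀ v : V, A y v + B u v = 0) :
    y = 0 ∧ u = 0 ∧ p = 0 := by
  have hBp : Bstar p = -u := by
    have := hu; linear_combination (norm := abel_nf) hu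
  -- B u p = -‖u‖²
  have hBup : B u p = -‖u‖ ^ 2 := by
    rw [hBstar u p, hBp, inner_neg_left, real_inner_self_eq_norm_sq]
  have h1 : ⟪C y, C y⟫ + A y p = 0 := hadj y
  have h2 : A y p + B u p = 0 := hstate p
  have hCy : ‖C y‖ ^ 2 + ‖u‖ ^ 2 = 0 := by
    rw [real_inner_self_eq_norm_sq] at h1
    nlinarith [h1, h2, hBup]
  have hCy0 : C y = 0 := by
    have : ‖C y‖ ^ 2 = 0 := by nlinarith [sq_nonneg ‖C y‖, sq_nonneg ‖u‖]
    simpa [pow_eq_zero_iff, norm_eq_zero] using this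
  have hu0 : u = 0 := by
    have : ‖u‖ ^ 2 = 0 := by nlinarith [sq_nonneg ‖C y‖, sq_nonneg ‖u‖]
    simpa [pow_eq_zero_iff, norm_eq_zero] using this
  -- y = 0 via detectability
  have hy0 : y = 0 := by
    have hAy : A y y = 0 := by
      have := hstate y
      simpa [hu0] using this
    have := hdet y
    rw [hCy0, hAy] at this
    simp only [map_zero, ContinuousLinearMap.zero_apply, add_zero] at this
    have hn : ‖y‖ ^ 2 = 0 := by nlinarith [sq_nonneg ‖y‖]
    simpa [pow_eq_zero_iff, norm_eq_zero] using hn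
  -- p = 0 via stabilizability
  have hp0 : p = 0 := by
    have hApp : A p p = 0 := by
      have := hadj p
      rw [hCy0] at this
      simpa using this
    have hBKB : B (KB p) p = 0 := by
      rw [hBstar (KB p) p, hBp, hu0]
      simp
    have := hstab p
    rw [hApp, hBKB] at this
    have hn : ‖p‖ ^ 2 = 0 := by nlinarith [sq_nonneg ‖p‖]
    simpa [pow_eq_zero_iff, norm_eq_zero] using hn
  exact ⟨hy0, hu0, hp0⟩
end

section
/- Let 𝒱, 𝒰, 𝒴, ℋ be real Hilbert spaces, let A : 𝒱 → 𝒱*, B : 𝒰 → 𝒱*, C : 𝒱 → 𝒴, K_C : 𝒴 → 𝒱* be bounded linear operators, and let B* : 𝒱 → 𝒰 be a bounded linear operator satisfying ⟨Bu, v⟩ = ⟪B*v, u⟫_𝒰 for all u ∈ 𝒰, v ∈ 𝒱. Assume the detectability condition: there is α > 0 with ⟨Aw, w⟩ + ⟨K_C(Cw), w⟩ ≥ α‖w‖²_𝒱 for all w ∈ 𝒱. Let y ∈ 𝒱, p ∈ 𝒱, dy ∈ 𝒱*, y_T, y_0 ∈ ℋ, ε₃ ∈ 𝒰, ε₄ ∈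 𝒱*, ε₅ ∈ ℋ satisfy: (a) the state equation ⟨dy, v⟩ + ⟨Ay, v⟩ + ⟨B(−B*p + ε₃), v⟩ = ⟨ε₄, v⟩ for all v ∈ 𝒱; (b) y_0 = ε₅; (c) the energy identity ⟨dy, y⟩ = ½(‖y_T‖²_ℋ − ‖y_0‖²_ℋ). Then ½‖y_T‖²_ℋ + α‖y‖²_𝒱 ≤ (‖ε₄‖_{𝒱*} + ‖B‖·‖ε₃‖_𝒰 + ‖B‖·‖B*p‖_𝒰 + ‖K_C‖·‖Cy‖_𝒴)·‖y‖_𝒱 + ½‖ε₅‖²_ℋ. -/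
open RealInnerProductSpace

/-- State-energy estimate in the proof of Theorem 5.2, using uniform
detectability of (A, C). -/
theorem stmt_11 {V U Y H : Type*}
    [NormedAddCommGroup V] [InnerProductSpace ℝ V] [CompleteSpace V]
    [NormedAddCommGroup U] [InnerProductSpace ℝ U] [CompleteSpace U]
    [NormedAddCommGroup Y] [InnerProductSpace ℝ Y] [CompleteSpace Y]
    [NormedAddCommGroup H] [InnerProductSpace ℝ H] [CompleteSpace H]
    (A : V →L[ℝ] V →L[ℝ] ℝ) (B : U →L[ℝ] V →L[ℝ] ℝ) (C : V →L[ℝ] Y)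
    (KC : Y →L[ℝ] V →L[ℝ] ℝ) (Bstar : V →L[ℝ] U)
    (hBstar : ∀ (u : U) (v : V), B u v = ⟪Bstar v, u⟫)
    (α : ℝ) (hα : 0 < α)
    (hdet : ∀ w : V, A w w + KC (C w) w ≥ α * ‖w‖ ^ 2)
    (y p : V) (dy : V →L[ℝ] ℝ) (yT y0 : H) (ε₃ : U) (ε₄ : V →L[ℝ] ℝ) (ε₅ : H)
    (hstate : ∀ v : V, dy v + A y v + B (-Bstar p + ε₃) v = ε₄ v)
    (hy0 : y0 = ε₅)
    (henergy : dy y = 1 / 2 * (‖yT‖ ^ 2 - ‖y0‖ ^ 2)) :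
    1 / 2 * ‖yT‖ ^ 2 + α * ‖y‖ ^ 2 ≤
      (‖ε₄‖ + ‖B‖ * ‖ε₃‖ + ‖B‖ * ‖Bstar p‖ + ‖KC‖ * ‖C y‖) * ‖y‖
        + 1 / 2 * ‖ε₅‖ ^ 2 := by
  have key := hstate y
  have h1 : ε₄ y ≤ ‖ε₄‖ * ‖y‖ := (le_abs_self _).trans (by simpa using ε₄.le_opNorm y)
  have h2 : B (Bstar p) y ≤ ‖B‖ * ‖Bstar p‖ * ‖y‖ :=
    (le_abs_self _).trans ((B (Bstar p)).le_opNorm y |>.trans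
      (mul_le_mul_of_nonneg_right (B.le_opNorm _) (norm_nonneg _)))
  have h3 : -(B ε₃ y) ≤ ‖B‖ * ‖ε₃‖ * ‖y‖ :=
    (neg_le_abs _).trans ((B ε₃).le_opNorm y |>.trans
      (mul_le_mul_of_nonneg_right (B.le_opNorm _) (norm_nonneg _)))
  have h4 : KC (C y) y ≤ ‖KC‖ * ‖C y‖ * ‖y‖ :=
    (le_abs_self _).trans ((KC (C y)).le_opNorm y |>.trans
      (mul_le_mul_of_nonneg_right (KC.le_opNorm _) (norm_nonneg _)))
  have hdy : dy y = 1 / 2 * ‖yT‖ ^ 2 - 1 / 2 * ‖ε₅‖ ^ 2 := by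
    rw [henergy, hy0]; ring
  have hdet' := hdet y
  have hBexp : B (-Bstar p + ε₃) y = -(B (Bstar p) y) + B ε₃ y := by
    simp [map_add, map_neg]
  have : 1 / 2 * ‖yT‖ ^ 2 + α * ‖y‖ ^ 2 ≤
      ε₄ y + B (Bstar p) y + (-(B ε₃ y)) + KC (C y) y + 1 / 2 * ‖ε₅‖ ^ 2 := by
    have := hdet y
    nlinarith [hstate y, hdy, hBexp]
  calc 1 / 2 * ‖yT‖ ^ 2 + α * ‖y‖ ^ 2
      ≤ ε₄ y + B (Bstar p) y + (-(B ε₃ y)) + KC (C y) y + 1 / 2 * ‖ε₅‖ ^ 2 := this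
    _ ≤ ‖ε₄‖ * ‖y‖ + ‖B‖ * ‖Bstar p‖ * ‖y‖ + ‖B‖ * ‖ε₃‖ * ‖y‖ + ‖KC‖ * ‖C y‖ * ‖y‖
          + 1 / 2 * ‖ε₅‖ ^ 2 := by linarith
    _ = (‖ε₄‖ + ‖B‖ * ‖ε₃‖ + ‖B‖ * ‖Bstar p‖ + ‖KC‖ * ‖C y‖) * ‖y‖
          + 1 / 2 * ‖ε₅‖ ^ 2 := by ring
end
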